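/- arXiv:1710.05218 — 8 statements merged into one kernel-verified Lean document; each statement's English description precedes it below -/
import Mathlib

section
/- Let T ∈ ℝ^(r×m) be a matrix and g : Fin r → Fin m. The system of inequalities T_{i,g(i)} - x_{g(i)} ≥ T_{i,k} - x_k for all i ∈ Fin r and all k ∈ Fin m with k ≠ g(i) is feasible in x ∈ ℝ^m if and only if the reduced system consisting only of those inequalities with k in the range of g is feasible. -/
/-! Inequalities with `k = g i` hold trivially. For `k` outside the range of `g`, the value `x k`
only occurs in the bounded terms `T i k - x k`, never in `T i (g i) - x (g i)`, so raising it
above the finitely many numbers `T i k - T i (g i) + x (g i)` satisfies all of them. -/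

theorem exists_forall_sub_le_of_forall_mem_range {ι α : Type*} [Finite ι] [Finite α]
    (T : ι → α → ℝ) (g : ι → α) {x : α → ℝ}
    (hx : ∀ i, ∀ k ∈ Set.range g, T i k - x k ≤ T i (g i) - x (g i)) :
    ∃ y : α → ℝ, ∀ i k, T i k - y k ≤ T i (g i) - y (g i) := by
  obtain ⟨C, hC⟩ := Finite.exists_le fun p : ι × α => T p.1 p.2 - T p.1 (g p.1) + x (g p.1)
  classical
  refine ⟨(Set.range g).piecewise x fun _ => C, fun i k => ?_⟩
  rw [Set.piecewise_eq_of_mem _ _ _ (Set.mem_range_self i)]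
  by_cases hk : k ∈ Set.range g
  · rw [Set.piecewise_eq_of_mem _ _ _ hk]
    exact hx i k hk
  · rw [Set.piecewise_eq_of_notMem _ _ _ hk]
    linarith [hC (i, k)]

theorem stmt_0 {r m : ℕ} (T : Matrix (Fin r) (Fin m) ℝ) (g : Fin r → Fin m) :
    (∃ x : Fin m → ℝ, ∀ i k, k ≠ g i → T i (g i) - x (g i) ≥ T i k - x k) ↔
    (∃ x : Fin m → ℝ, ∀ i k, k ≠ g i → k ∈ Set.range g →
      T i (g i) - x (g i) ≥ T i k - x k) := by
  refine ⟨fun ⟨x, hx⟩ => ⟨x, fun i k hk _ => hx i k hk⟩, fun ⟨x, hx⟩ => ?_⟩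
  obtain ⟨y, hy⟩ := exists_forall_sub_le_of_forall_mem_range T g (x := x) fun i k hk =>
    (eq_or_ne k (g i)).elim (fun h => h ▸ le_rfl) (fun h => hx i k h hk)
  exact ⟨y, fun i k _ => hy i k⟩
end

section
/- Let T¹, T² ∈ ℝ^(r×m). Then the sets of IC outcome functions of T¹ and T² coincide if and only if for every pair of index sets I ⊆ Fin r and J ⊆ Fin m with |I| = |J|, the set of bijections τ : I → J attaining the maximum of Σ_{i∈I} T_{i,τ(i)} is the same for T¹ and T² (i.e., the minors T¹_{I,J} and T²_{I,J} have the same set of permutations achieving their max-plus tropical determinant). -/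
def IsIC {r m : ℕ} (T : Matrix (Fin r) (Fin m) ℝ) (h : Fin r → Fin m) : Prop :=
  ∃ x : Fin m → ℝ, ∀ i k, T i (h i) - x (h i) ≥ T i k - x k

/-!
An outcome function is IC exactly when it is cyclically monotone: permuting the outcomes of
finitely many rows on which it is injective never increases the total value, i.e. it is an
optimal assignment of every such set of rows onto its image (Rochet). Necessity is a sum of IC
inequalities. For sufficiency, give the outcomes the allocation graph with edge weights
`min_{g i = a} (T i a - T i b)`; cyclic monotonicity says it has no negative cycle, so
shortest-walk distances are prices making `g` IC. An optimal assignment `τ : I → J` is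
cyclically monotone on `I`, so it extends to an IC outcome function. Hence `IC(T)` and the sets
of optimal assignments of all square minors of `T` determine each other.
-/

open Finset

section Walks

variable {α : Type*} (d : α → α → ℝ)

def walkWeight : List α → ℝ
  | [] => 0
  | [_] => 0
  | a :: b :: t => d a b + walkWeight (b :: t)

@[simp] lemma walkWeight_singleton (a : α) : walkWeight d [a] = 0 := rfl

@[simp] lemma walkWeight_cons_cons (a b : α) (t : List α) :
    walkWeight d (a :: b :: t) = d a b + walkWeight d (b :: t) := rfl

lemma walkWeight_append_cons (v : α) (ys : List α) :
    ∀ xs : List α, walkWeight d (xs ++ v :: ys) = walkWeight d (xs ++ [v]) + walkWeight d (v :: ys)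
  | [] => by simp
  | [a] => by simp
  | a :: b :: xs => by
    have ih := walkWeight_append_cons v ys (b :: xs)
    simp only [List.cons_append, walkWeight_cons_cons] at ih ⊢
    rw [ih]
    ring

lemma walkWeight_concat_of_isChain {f : α → α} :
    ∀ (l : List α) (w : α), List.IsChain (fun a b => f a = b) (l ++ [w]) →
      walkWeight d (l ++ [w]) = (l.map fun a => d a (f a)).sum
  | [], _, _ => by simp
  | [a], w, h => by
    rw [List.singleton_append, List.isChain_cons_cons] at h
    simp [← h.1]
  | a :: b :: t, w, h => by
    simp only [List.cons_append, List.isChain_cons_cons] at h ⊢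
    obtain ⟨rfl, h⟩ := h
    have ih := walkWeight_concat_of_isChain (f a :: t) w h
    simp only [List.cons_append] at ih
    simp [ih]

variable {d} [DecidableEq α]

lemma isChain_formPerm {v : α} {q : List α} (h : (v :: q).Nodup) :
    List.IsChain (fun a b => (v :: q).formPerm a = b) (v :: q ++ [v]) := by
  rw [List.isChain_iff_getElem]
  intro i hi
  have hin : i < (v :: q).length := by simpa using hi
  rw [List.getElem_append_left hin, List.formPerm_apply_getElem _ h i hin]
  rcases Nat.lt_or_ge (i + 1) (v :: q).length with hlt | hge
  · have hmod : (i + 1) % (q.length + 1) = i + 1 := Nat.mod_eq_of_lt (by simpa using hlt)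
    rw [List.getElem_append_left hlt]
    simp [hmod]
  · have heq : i + 1 = (v :: q).length := by
      simp only [List.length_append, List.length_cons, List.length_nil] at hge hi ⊢
      omega
    rw [List.getElem_append_right hge]
    simp [heq]

lemma walkWeight_cycle {v : α} {q : List α} (h : (v :: q).Nodup) :
    walkWeight d (v :: q ++ [v]) = ∑ a ∈ (v :: q).toFinset, d a ((v :: q).formPerm a) := by
  rw [walkWeight_concat_of_isChain d _ v (isChain_formPerm h), List.sum_toFinset _ h]

/-- Cycles are nodup lists `c`, with edges `a → c.formPerm a`. -/
def NoNegativeCyclesOn (d : α → α → ℝ) (S : Set α) : Prop :=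
  ∀ c : List α, c.Nodup → (∀ a ∈ c, a ∈ S) → 0 ≤ ∑ a ∈ c.toFinset, d a (c.formPerm a)

variable {S : Set α}

lemma NoNegativeCyclesOn.exists_nodup_walkWeight_le (hd : NoNegativeCyclesOn d S) :
    ∀ (t : List α) (a : α), a ∈ S → (∀ u ∈ t, u ∈ S) →
      ∃ t', (a :: t').Nodup ∧ (∀ u ∈ t', u ∈ S) ∧ walkWeight d (a :: t') ≤ walkWeight d (a :: t)
  | [], a, _, _ => ⟨[], List.nodup_singleton a, by simp, le_rfl⟩
  | b :: t, a, ha, ht => by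
    rw [List.forall_mem_cons] at ht
    obtain ⟨t₁, hnd, hS, hle⟩ := hd.exists_nodup_walkWeight_le t b ht.1 ht.2
    have hstep : walkWeight d (a :: b :: t₁) ≤ walkWeight d (a :: b :: t) := by
      simp only [walkWeight_cons_cons] at hle ⊢
      linarith
    have hbS : ∀ u ∈ b :: t₁, u ∈ S := List.forall_mem_cons.2 ⟨ht.1, hS⟩
    by_cases hab : a ∈ b :: t₁
    · -- the walk returns to `a`: cut out the simple cycle it closes
      obtain ⟨q, s, hqs⟩ := List.append_of_mem hab
      rw [hqs] at hnd hstep hbS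
      have hcyc : (a :: q).Nodup :=
        (List.nodup_middle.1 hnd).sublist ((List.sublist_append_left q s).cons_cons a)
      have hsplit := walkWeight_append_cons d a s (a :: q)
      have hnonneg := walkWeight_cycle (d := d) hcyc ▸ hd (a :: q) hcyc
        (List.forall_mem_cons.2 ⟨ha, fun u hu => hbS u (List.mem_append_left _ hu)⟩)
      refine ⟨s, hnd.sublist (List.sublist_append_right q _), fun u hu =>
        hbS u (List.mem_append_right q (List.mem_cons_of_mem a hu)), ?_⟩
      simp only [List.cons_append] at hsplit hstep hnonneg
      linarith
    · exact ⟨b :: t₁, List.nodup_cons.2 ⟨hab, hnd⟩, hbS, hstep⟩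

lemma NoNegativeCyclesOn.exists_potential [Fintype α] (hd : NoNegativeCyclesOn d S) :
    ∃ x : α → ℝ, ∀ a ∈ S, ∀ b ∈ S, x a ≤ d a b + x b := by
  classical
  -- `x b` is the least weight of a simple walk in `S` starting at `b`
  let L : Finset (List α) :=
    (univ.image (Subtype.val : {l : List α // l.Nodup} → List α)).filter fun t => ∀ u ∈ t, u ∈ S
  have hL : ∀ t : List α, t.Nodup → (∀ u ∈ t, u ∈ S) → t ∈ L := fun t ht htS =>
    mem_filter.2 ⟨mem_image_of_mem _ (mem_univ (⟨t, ht⟩ : {l : List α // l.Nodup})), htS⟩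
  have hne : L.Nonempty := ⟨[], hL [] List.nodup_nil (by simp)⟩
  refine ⟨fun b => L.inf' hne fun t => walkWeight d (b :: t), fun a ha b hb => ?_⟩
  obtain ⟨t, ht, he⟩ := exists_mem_eq_inf' hne fun t => walkWeight d (b :: t)
  obtain ⟨t', hnd, htS', hle⟩ := hd.exists_nodup_walkWeight_le (b :: t) a ha
    (List.forall_mem_cons.2 ⟨hb, (mem_filter.1 ht).2⟩)
  calc L.inf' hne (fun t => walkWeight d (a :: t)) ≤ walkWeight d (a :: t') :=
        inf'_le _ (hL t' hnd.of_cons htS')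
    _ ≤ walkWeight d (a :: b :: t) := hle
    _ = d a b + L.inf' hne (fun t => walkWeight d (b :: t)) := by rw [he]; rfl

end Walks

lemma Equiv.Perm.bijOn_of_eq_self_of_notMem {α : Type*} {σ : Equiv.Perm α} {s t : Set α}
    (hσ : ∀ k ∉ s, σ k = k) (hst : s ⊆ t) : Set.BijOn σ t t := by
  refine σ.bijOn fun k => ?_
  by_cases hk : k ∈ s
  · have hσk : σ k ∈ s := by
      by_contra h
      rw [σ.injective (hσ _ h)] at h
      exact h hk
    exact iff_of_true (hst hσk) (hst hk)
  · rw [hσ k hk]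

lemma Set.InjOn.bijOn_finsetImage {ι κ : Type*} [DecidableEq κ] {g : ι → κ} {I : Finset ι}
    (h : Set.InjOn g I) : Set.BijOn g I (I.image g) := by
  rw [coe_image]
  exact h.bijOn_image

section Assignments

variable {ι κ : Type*}

def IsMaxAssignment (T : Matrix ι κ ℝ) (I : Finset ι) (J : Finset κ) (τ : ι → κ) : Prop :=
  ∀ τ' : ι → κ, Set.BijOn τ' I J → ∑ i ∈ I, T i (τ' i) ≤ ∑ i ∈ I, T i (τ i)

lemma isMaxAssignment_of_prices {T : Matrix ι κ ℝ} {I : Finset ι} {J : Finset κ} {g : ι → κ}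
    {x : κ → ℝ} (hx : ∀ i ∈ I, ∀ k, T i k - x k ≤ T i (g i) - x (g i)) (hg : Set.BijOn g I J) :
    IsMaxAssignment T I J g := by
  intro τ' hτ'
  have hsum := sum_le_sum fun i hi => hx i hi (τ' i)
  have hx' : ∀ f : ι → κ, Set.BijOn f I J → ∑ i ∈ I, x (f i) = ∑ k ∈ J, x k := fun f hf =>
    sum_nbij f (fun i hi => hf.mapsTo hi) hf.injOn hf.surjOn fun _ _ => rfl
  rw [sum_sub_distrib, sum_sub_distrib, hx' τ' hτ', hx' g hg] at hsum
  linarith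

variable [DecidableEq κ] (T : Matrix ι κ ℝ)

def IsCyclicallyMonotoneOn (P : Finset ι) (g : ι → κ) : Prop :=
  ∀ I ⊆ P, Set.InjOn g I → ∀ σ : Equiv.Perm κ, (∀ k ∉ I.image g, σ k = k) →
    ∑ i ∈ I, T i (σ (g i)) ≤ ∑ i ∈ I, T i (g i)

/-- For `a ∉ g '' P` this is an infimum over the empty type, i.e. the junk value `0`. -/
noncomputable def allocationGraph (P : Finset ι) (g : ι → κ) (a b : κ) : ℝ :=
  ⨅ i : P.filter (g · = a), T i a - T i b

variable {T} {P I : Finset ι} {J : Finset κ} {g τ : ι → κ}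

lemma isCyclicallyMonotoneOn_of_isMaxAssignment
    (h : ∀ I ⊆ P, Set.InjOn g I → IsMaxAssignment T I (I.image g) g) :
    IsCyclicallyMonotoneOn T P g := fun I hI hinj σ hσ =>
  h I hI hinj (σ ∘ g) ((σ.bijOn_of_eq_self_of_notMem hσ subset_rfl).comp hinj.bijOn_finsetImage)

lemma IsMaxAssignment.isCyclicallyMonotoneOn (hτ : Set.BijOn τ I J)
    (hmax : IsMaxAssignment T I J τ) : IsCyclicallyMonotoneOn T I τ := by
  classical
  intro I' hI' _ σ hσ
  have himg : (↑(I'.image τ) : Set κ) ⊆ J := by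
    rw [coe_image]
    exact (Set.image_mono hI').trans hτ.image_eq.le
  have hle := hmax _ ((σ.bijOn_of_eq_self_of_notMem hσ himg).comp hτ)
  have hfix : ∀ i ∈ I \ I', T i (σ (τ i)) = T i (τ i) := by
    intro i hi
    rw [mem_sdiff] at hi
    rw [hσ _ fun h => ?_]
    obtain ⟨j, hj, hji⟩ := mem_image.1 h
    exact hi.2 (hτ.injOn (hI' hj) hi.1 hji ▸ hj)
  simp only [Function.comp_apply] at hle
  rw [← sum_sdiff hI', ← sum_sdiff hI' (f := fun i => T i (τ i)), sum_congr rfl hfix] at hle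
  linarith

lemma allocationGraph_le {i : ι} (hi : i ∈ P) (b : κ) :
    allocationGraph T P g (g i) b ≤ T i (g i) - T i b :=
  ciInf_le (Finite.bddBelow_range _) (⟨i, mem_filter.2 ⟨hi, rfl⟩⟩ : P.filter (g · = g i))

lemma exists_eq_allocationGraph {a : κ} (ha : a ∈ P.image g) (b : κ) :
    ∃ i ∈ P, g i = a ∧ T i a - T i b = allocationGraph T P g a b := by
  obtain ⟨i, hi, rfl⟩ := mem_image.1 ha
  have : Nonempty (P.filter (g · = g i)) := ⟨⟨i, mem_filter.2 ⟨hi, rfl⟩⟩⟩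
  obtain ⟨⟨j, hj⟩, hj'⟩ := exists_eq_ciInf_of_finite
    (f := fun j : P.filter (g · = g i) => T j (g i) - T j b)
  exact ⟨j, (mem_filter.1 hj).1, (mem_filter.1 hj).2, hj'⟩

lemma IsCyclicallyMonotoneOn.noNegativeCyclesOn_allocationGraph [Nonempty ι]
    (hg : IsCyclicallyMonotoneOn T P g) :
    NoNegativeCyclesOn (allocationGraph T P g) ↑(P.image g) := by
  classical
  intro c hc hcS
  set C := c.toFinset
  -- along each edge `a → π a` of the cycle, move the row realising the edge weight
  set π := c.formPerm
  choose! row hrowP hgrow hrow using fun a (ha : a ∈ C) =>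
    exists_eq_allocationGraph (T := T) (hcS a (List.mem_toFinset.1 ha)) (π a)
  have hrow_inj : Set.InjOn row C := fun a ha b hb hab => by
    rw [← hgrow a ha, ← hgrow b hb, hab]
  have hinj : Set.InjOn g (C.image row) := by
    intro i hi j hj hij
    obtain ⟨a, ha, rfl⟩ := mem_image.1 (mem_coe.1 hi)
    obtain ⟨b, hb, rfl⟩ := mem_image.1 (mem_coe.1 hj)
    rw [hgrow a ha, hgrow b hb] at hij
    rw [hij]
  have himg : (C.image row).image g = C := by
    rw [image_image]
    exact (image_congr fun a ha => hgrow a ha).trans image_id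
  have hle := hg (C.image row) (image_subset_iff.2 hrowP) hinj π fun k hk =>
    List.formPerm_apply_of_notMem fun h => hk (by rw [himg]; exact List.mem_toFinset.2 h)
  rw [sum_image hrow_inj, sum_image hrow_inj] at hle
  calc 0 ≤ ∑ a ∈ C, (T (row a) (g (row a)) - T (row a) (π (g (row a)))) := by
        rw [sum_sub_distrib]
        linarith
    _ = ∑ a ∈ C, allocationGraph T P g a (π a) :=
        sum_congr rfl fun a ha => by rw [hgrow a ha, hrow a ha]

lemma IsCyclicallyMonotoneOn.exists_prices [Fintype κ] (hg : IsCyclicallyMonotoneOn T P g) :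
    ∃ x : κ → ℝ, ∀ i ∈ P, ∀ k, T i k - x k ≤ T i (g i) - x (g i) := by
  rcases P.eq_empty_or_nonempty with rfl | hP
  · exact ⟨0, by simp⟩
  have : Nonempty ι := ⟨hP.choose⟩
  obtain ⟨x, hx⟩ := hg.noNegativeCyclesOn_allocationGraph.exists_potential
  have hxg : ∀ i ∈ P, ∀ j ∈ P, x (g j) - T j (g j) + T j (g i) ≤ x (g i) := fun i hi j hj => by
    have := hx (g j) (mem_image_of_mem g hj) (g i) (mem_image_of_mem g hi)
    linarith [allocationGraph_le (T := T) (g := g) hj (g i)]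
  -- `x` only controls the outcomes in `g '' P`; extend it to the others by the largest
  -- price compatible with every row of `P`
  refine ⟨fun k => P.sup' hP fun j => x (g j) - T j (g j) + T j k, fun i hi k => ?_⟩
  have h₁ := le_sup' (fun j => x (g j) - T j (g j) + T j k) hi
  have h₂ := sup'_le hP (fun j => x (g j) - T j (g j) + T j (g i)) (hxg i hi)
  linarith

lemma IsMaxAssignment.exists_extension_prices [Fintype κ] (hτ : Set.BijOn τ I J)
    (hmax : IsMaxAssignment T I J τ) : ∃ h : ι → κ, (∀ i ∈ I, h i = τ i) ∧
      ∃ x : κ → ℝ, ∀ i k, T i k - x k ≤ T i (h i) - x (h i) := by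
  classical
  obtain ⟨x, hx⟩ := (hmax.isCyclicallyMonotoneOn hτ).exists_prices
  have hbest : ∀ i, ∃ k, ∀ k', T i k' - x k' ≤ T i k - x k := fun i =>
    have : Nonempty κ := ⟨τ i⟩
    Finite.exists_max fun k => T i k - x k
  choose best hbest using hbest
  refine ⟨I.piecewise τ best, fun i hi => piecewise_eq_of_mem _ _ _ hi, x, fun i k => ?_⟩
  by_cases hi : i ∈ I
  · rw [piecewise_eq_of_mem _ _ _ hi]
    exact hx i hi k
  · rw [piecewise_eq_of_notMem _ _ _ hi]
    exact hbest i k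

end Assignments

section IC

variable {r m : ℕ} {T T' : Matrix (Fin r) (Fin m) ℝ} {I : Finset (Fin r)} {J : Finset (Fin m)}
  {g : Fin r → Fin m}

lemma IsIC.isMaxAssignment (hg : IsIC T g) (hinj : Set.InjOn g I) :
    IsMaxAssignment T I (I.image g) g :=
  let ⟨_, hx⟩ := hg
  isMaxAssignment_of_prices (fun i _ k => hx i k) hinj.bijOn_finsetImage

lemma isIC_of_isMaxAssignment
    (h : ∀ I : Finset (Fin r), Set.InjOn g I → IsMaxAssignment T I (I.image g) g) : IsIC T g :=
  let ⟨x, hx⟩ :=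
    (isCyclicallyMonotoneOn_of_isMaxAssignment (P := univ) fun I _ => h I).exists_prices
  ⟨x, fun i k => hx i (mem_univ i) k⟩

lemma IsMaxAssignment.of_forall_isIC_imp (hIC : ∀ h, IsIC T h → IsIC T' h)
    (hτ : Set.BijOn g I J) (hmax : IsMaxAssignment T I J g) : IsMaxAssignment T' I J g := by
  obtain ⟨h, hhg, hh⟩ := hmax.exists_extension_prices hτ
  obtain ⟨x', hx'⟩ := hIC h hh
  have := isMaxAssignment_of_prices (fun i _ k => hx' i k) (hτ.congr fun i hi => (hhg i hi).symm)
  intro τ' hτ'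
  rw [sum_congr rfl fun i hi => congrArg (T' i) (hhg i hi).symm]
  exact this τ' hτ'

end IC

theorem stmt_2 {r m : ℕ} (T₁ T₂ : Matrix (Fin r) (Fin m) ℝ) :
    ({h | IsIC T₁ h} = {h | IsIC T₂ h}) ↔
    (∀ (I : Finset (Fin r)) (J : Finset (Fin m)), I.card = J.card →
      ∀ τ : Fin r → Fin m, Set.BijOn τ ↑I ↑J →
        ((∀ τ' : Fin r → Fin m, Set.BijOn τ' ↑I ↑J →
            ∑ i ∈ I, T₁ i (τ i) ≥ ∑ i ∈ I, T₁ i (τ' i)) ↔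
         (∀ τ' : Fin r → Fin m, Set.BijOn τ' ↑I ↑J →
            ∑ i ∈ I, T₂ i (τ i) ≥ ∑ i ∈ I, T₂ i (τ' i)))) := by
  constructor
  · intro hIC I J _ τ hτ
    exact ⟨IsMaxAssignment.of_forall_isIC_imp (fun _ hh => hIC.subset hh) hτ,
      IsMaxAssignment.of_forall_isIC_imp (fun _ hh => hIC.superset hh) hτ⟩
  · intro H
    ext h
    constructor <;> intro hh <;> refine isIC_of_isMaxAssignment fun I hI => ?_
    · exact (H I _ (card_image_of_injOn hI).symm h hI.bijOn_finsetImage).1 (hh.isMaxAssignment hI)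
    · exact (H I _ (card_image_of_injOn hI).symm h hI.bijOn_finsetImage).2 (hh.isMaxAssignment hI)
end

section
/- Let T¹ ∈ ℝ^(r₁×m), T² ∈ ℝ^(r₂×m), and g : Fin r₁ × Fin r₂ → Fin m. Then g is a two-player IC outcome function on T¹ × T² if and only if every column function g(·, j) : Fin r₁ → Fin m is IC on T¹ and every row function g(i, ·) : Fin r₂ → Fin m is IC on T². -/
/-!
Taxation principle: an outcome function is IC, i.e. implementable by prices on outcomes, iff it is
implementable by payments on reports. Given truthful payments `p`, price each outcome `k` by the
largest utility shift `⨆ i, T i k - (T i (h i) - p i)`; truthfulness of `p` says this supremum is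
attained at `i` itself when `k = h i`, so the price of `h i` is `p i`. The two-player condition is
exactly a family of single-agent payment conditions, one per column and one per row.
-/

theorem exists_prices_of_payments {ι κ : Type*} [Finite ι] (v : ι → κ → ℝ) (h : ι → κ)
    (p : ι → ℝ) (hp : ∀ i i', v i (h i) - p i ≥ v i (h i') - p i') :
    ∃ x : κ → ℝ, ∀ i k, v i (h i) - x (h i) ≥ v i k - x k := by
  set x : κ → ℝ := fun k => ⨆ i, v i k - (v i (h i) - p i)
  have le_x : ∀ i k, v i k - (v i (h i) - p i) ≤ x k := fun i k =>
    le_ciSup (f := fun i => v i k - (v i (h i) - p i)) (Set.finite_range _).bddAbove i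
  have x_outcome : ∀ i, x (h i) = p i := fun i =>
    le_antisymm
      (haveI : Nonempty ι := ⟨i⟩; ciSup_le fun i' => by linarith [hp i' i])
      (by linarith [le_x i (h i)])
  refine ⟨x, fun i k => ?_⟩
  rw [x_outcome]
  linarith [le_x i k]

theorem isIC_iff_exists_payment {r m : ℕ} (T : Matrix (Fin r) (Fin m) ℝ) (h : Fin r → Fin m) :
    IsIC T h ↔ ∃ p : Fin r → ℝ, ∀ i i', T i (h i) - p i ≥ T i (h i') - p i' := by
  constructor
  · rintro ⟨x, hx⟩
    exact ⟨x ∘ h, fun i i' => hx i (h i')⟩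
  · rintro ⟨p, hp⟩
    exact exists_prices_of_payments T h p hp

theorem stmt_3 {r₁ r₂ m : ℕ} (T₁ : Matrix (Fin r₁) (Fin m) ℝ)
    (T₂ : Matrix (Fin r₂) (Fin m) ℝ) (g : Fin r₁ × Fin r₂ → Fin m) :
    (∃ (p₁ p₂ : Fin r₁ × Fin r₂ → ℝ),
      (∀ j i i', T₁ i (g (i, j)) - p₁ (i, j) ≥ T₁ i (g (i', j)) - p₁ (i', j)) ∧
      (∀ i j j', T₂ j (g (i, j)) - p₂ (i, j) ≥ T₂ j (g (i, j')) - p₂ (i, j'))) ↔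
    ((∀ j, IsIC T₁ (fun i => g (i, j))) ∧ (∀ i, IsIC T₂ (fun j => g (i, j)))) := by
  simp only [isIC_iff_exists_payment]
  constructor
  · rintro ⟨p₁, p₂, h₁, h₂⟩
    exact ⟨fun j => ⟨fun i => p₁ (i, j), h₁ j⟩, fun i => ⟨fun j => p₂ (i, j), h₂ i⟩⟩
  · rintro ⟨hcol, hrow⟩
    choose p₁ hp₁ using hcol
    choose p₂ hp₂ using hrow
    exact ⟨fun q => p₁ q.2 q.1, fun q => p₂ q.1 q.2, hp₁, hp₂⟩
end

section
/- Let T¹ = [[0,2,3],[0,4,2],[0,3,7]] and T² = [[0,5,-5],[0,-2,9],[0,1,3]] (3×3 real matrices), and let g : Fin 3 × Fin 3 → Fin 3 be given by the matrix [[2,1,1],[2,1,2],[3,3,3]] (1-indexed outcomes). Then for all real α₁, α₂ > 0 and all γ ∈ ℝ³, there is no z ∈ ℝ³ satisfying α₁T¹_{i,g(i,j)} + α₂T²_{j,g(i,j)} + γ_{g(i,j)} - z_{g(i,j)} ≥ α₁T¹_{i,k} + α₂T²_{j,k} + γ_k - z_k for all i,j ∈ Fin 3, k ∈ Fin 3.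 In other words, g is not an affine maximizer on T¹ × T². -/
/-! Sum the maximality inequalities at `(i, j, k) = (0,0,0), (0,1,2), (1,1,1), (2,0,1)` (0-indexed)
with multiplicities `3, 1, 2, 1`. Along these instances the outcomes move `1 → 0` three times,
`0 → 2` once, `0 → 1` twice and `2 → 1` once, so every outcome is entered as often as it is left
and the terms `γ k - z k` cancel. The coefficient of `α₂` is `15 - 9 + 4 - 10 = 0` and that of
`α₁` is `6 - 3 - 8 + 4 = -1`, leaving `0 ≥ α₁`. -/

noncomputable def T6₁ : Matrix (Fin 3) (Fin 3) ℝ := !![0,2,3; 0,4,2; 0,3,7]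
noncomputable def T6₂ : Matrix (Fin 3) (Fin 3) ℝ := !![0,5,-5; 0,-2,9; 0,1,3]

def g6 : Fin 3 → Fin 3 → Fin 3 := ![![1,0,0], ![1,0,1], ![2,2,2]]

theorem stmt_6 :
    ∀ (α₁ α₂ : ℝ), 0 < α₁ → 0 < α₂ → ∀ (γ z : Fin 3 → ℝ),
      ¬ (∀ (i j k : Fin 3),
          α₁ * T6₁ i (g6 i j) + α₂ * T6₂ j (g6 i j) + γ (g6 i j) - z (g6 i j) ≥
          α₁ * T6₁ i k + α₂ * T6₂ j k + γ k - z k) := by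
  intro α₁ α₂ hα₁ _ γ z hmax
  have h₀₀₀ : α₁ * 2 + α₂ * 5 + γ 1 - z 1 ≥ γ 0 - z 0 := by
    simpa [T6₁, T6₂, g6] using hmax 0 0 0
  have h₀₁₂ : γ 0 - z 0 ≥ α₁ * 3 + α₂ * 9 + γ 2 - z 2 := by
    simpa [T6₁, T6₂, g6] using hmax 0 1 2
  have h₁₁₁ : γ 0 - z 0 ≥ α₁ * 4 + α₂ * -2 + γ 1 - z 1 := by
    simpa [T6₁, T6₂, g6] using hmax 1 1 1
  have h₂₀₁ : α₁ * 7 + α₂ * -5 + γ 2 - z 2 ≥ α₁ * 3 + α₂ * 5 + γ 1 - z 1 := by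
    simpa [T6₁, T6₂, g6] using hmax 2 0 1
  have : α₁ ≤ 0 := by linear_combination 3 * h₀₀₀ + h₀₁₂ + 2 * h₁₁₁ + h₂₀₁
  exact absurd hα₁ this.not_gt
end

section
/- Define g : Fin 2 × Fin 2 × Fin 2 → Fin 6 by g(1,1,1)=1, g(1,1,2)=3, g(1,2,1)=4, g(1,2,2)=1, g(2,1,1)=5, g(2,1,2)=2, g(2,2,1)=2, g(2,2,2)=6. Suppose S¹, S², S³ ∈ ℝ^(2×6) and z ∈ ℝ⁶ satisfy S¹_{i₁,g(i)} + S²_{i₂,g(i)} + S³_{i₃,g(i)} - z_{g(i)} ≥ S¹_{i₁,k} + S²_{i₂,k} + S³_{i₃,k} - z_k for all i = (i₁,i₂,i₃) ∈ (Fin 2)³ and all k ∈ Fin 6 with k ≠ g(i). Then S¹_{1,1} + S¹_{2,2} ≥ S¹_{1,2} + S¹_{2,1}. -/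
/- Compare outcomes 0 and 1 at four type profiles: g7 picks 0 at (0,0,0) and (0,1,1) and 1 at
(1,0,1) and (1,1,0). Each row of S₂ and S₃, and each of z 0, z 1, enters these four inequalities once
on each side, so their sum leaves only 2 (S₁ 0 0 + S₁ 1 1) ≥ 2 (S₁ 0 1 + S₁ 1 0). -/

def g7 : Fin 2 → Fin 2 → Fin 2 → Fin 6 :=
  ![![![0,2], ![3,0]], ![![4,1], ![1,5]]]

theorem stmt_7 (S₁ S₂ S₃ : Matrix (Fin 2) (Fin 6) ℝ) (z : Fin 6 → ℝ)
    (h : ∀ (i₁ i₂ i₃ : Fin 2) (k : Fin 6), k ≠ g7 i₁ i₂ i₃ →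
      S₁ i₁ (g7 i₁ i₂ i₃) + S₂ i₂ (g7 i₁ i₂ i₃) + S₃ i₃ (g7 i₁ i₂ i₃) - z (g7 i₁ i₂ i₃) ≥
      S₁ i₁ k + S₂ i₂ k + S₃ i₃ k - z k) :
    S₁ 0 0 + S₁ 1 1 ≥ S₁ 0 1 + S₁ 1 0 := by
  have h₀₀₀ : S₁ 0 0 + S₂ 0 0 + S₃ 0 0 - z 0 ≥ S₁ 0 1 + S₂ 0 1 + S₃ 0 1 - z 1 :=
    h 0 0 0 1 (by decide)
  have h₀₁₁ : S₁ 0 0 + S₂ 1 0 + S₃ 1 0 - z 0 ≥ S₁ 0 1 + S₂ 1 1 + S₃ 1 1 - z 1 :=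
    h 0 1 1 1 (by decide)
  have h₁₀₁ : S₁ 1 1 + S₂ 0 1 + S₃ 1 1 - z 1 ≥ S₁ 1 0 + S₂ 0 0 + S₃ 1 0 - z 0 :=
    h 1 0 1 0 (by decide)
  have h₁₁₀ : S₁ 1 1 + S₂ 1 1 + S₃ 0 1 - z 1 ≥ S₁ 1 0 + S₂ 1 0 + S₃ 0 0 - z 0 :=
    h 1 1 0 0 (by decide)
  linarith
end

section
/- Suppose S¹, S² ∈ ℝ^(2×4) satisfy: (a) S¹_{1,2} + S¹_{2,4} > S¹_{1,4} + S¹_{2,2}; (b) S²_{1,3} + S²_{2,1} > S²_{1,1} + S²_{2,3}; and (c) there exists Z ∈ ℝ⁴ with S¹_{1,4}+S²_{1,4}-Z₄ ≥ S¹_{1,3}+S²_{1,3}-Z₃, S¹_{1,3}+S²_{2,3}-Z₃ ≥ S¹_{1,2}+S²_{2,2}-Z₂, S¹_{2,1}+S²_{1,1}-Z₁ ≥ S¹_{2,4}+S²_{1,4}-Z₄, and S¹_{2,2}+S²_{2,2}-Z₂ ≥ S¹_{2,1}+S²_{2,1}-Z₁. Then we reach a contradiction (i.e., no such S¹, S²,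 Z exist). -/
theorem stmt_9 (S₁ S₂ : Matrix (Fin 2) (Fin 4) ℝ)
    (ha : S₁ 0 1 + S₁ 1 3 > S₁ 0 3 + S₁ 1 1)
    (hb : S₂ 0 2 + S₂ 1 0 > S₂ 0 0 + S₂ 1 2)
    (hc : ∃ Z : Fin 4 → ℝ,
      S₁ 0 3 + S₂ 0 3 - Z 3 ≥ S₁ 0 2 + S₂ 0 2 - Z 2 ∧
      S₁ 0 2 + S₂ 1 2 - Z 2 ≥ S₁ 0 1 + S₂ 1 1 - Z 1 ∧
      S₁ 1 0 + S₂ 0 0 - Z 0 ≥ S₁ 1 3 + S₂ 0 3 - Z 3 ∧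
      S₁ 1 1 + S₂ 1 1 - Z 1 ≥ S₁ 1 0 + S₂ 1 0 - Z 0) :
    False := by
  obtain ⟨Z, h₁, h₂, h₃, h₄⟩ := hc
  -- The six inequalities add up to `0 > 0`: every entry and every `Z i` cancels.
  linarith [ha, hb, h₁, h₂, h₃, h₄]
end

section
/- Let T ∈ ℝ^(r×m), let g : Fin r → Fin m be IC on T, and let I ⊆ Fin r be a set of indices on which g is injective, with J = g(I). Then the identity matching attains the max-plus tropical determinant of the minor T_{I,J}: for every bijection τ : I → J, Σ_{i∈I} T_{i,g(i)} ≥ Σ_{i∈I} T_{i,τ(i)}. -/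
open Finset

theorem Finset.sum_comp_eq_sum_comp_of_bijOn {ι κ M : Type*} [AddCommMonoid M] {s : Finset ι}
    {g τ : ι → κ} (hg : Set.InjOn g s) (hτ : Set.BijOn τ s (g '' s)) (f : κ → M) :
    ∑ i ∈ s, f (τ i) = ∑ i ∈ s, f (g i) := by
  classical
  have himage : s.image τ = s.image g := by
    apply coe_injective
    rw [coe_image, coe_image, hτ.image_eq]
  rw [← sum_image hτ.injOn, ← sum_image hg, himage]

theorem Finset.sum_le_sum_of_sub_le_of_sum_eq {ι κ M : Type*} [AddCommGroup M] [PartialOrder M]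
    [IsOrderedAddMonoid M] {s : Finset ι} {T : ι → κ → M} {x : κ → M} {g τ : ι → κ}
    (hle : ∀ i ∈ s, T i (τ i) - x (τ i) ≤ T i (g i) - x (g i))
    (hx : ∑ i ∈ s, x (τ i) = ∑ i ∈ s, x (g i)) :
    ∑ i ∈ s, T i (τ i) ≤ ∑ i ∈ s, T i (g i) := by
  have hsum := sum_le_sum hle
  rw [sum_sub_distrib, sum_sub_distrib, hx] at hsum
  exact sub_le_sub_iff_right _ |>.mp hsum

theorem stmt_10 {r m : ℕ} (T : Matrix (Fin r) (Fin m) ℝ) (g : Fin r → Fin m)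
    (hg : IsIC T g) (I : Finset (Fin r)) (hinj : Set.InjOn g ↑I)
    (τ : Fin r → Fin m) (hτ : Set.BijOn τ ↑I (g '' ↑I)) :
    ∑ i ∈ I, T i (g i) ≥ ∑ i ∈ I, T i (τ i) := by
  obtain ⟨x, hx⟩ := hg
  exact sum_le_sum_of_sub_le_of_sum_eq (fun i _ => hx i (τ i))
    (sum_comp_eq_sum_comp_of_bijOn hinj hτ x)
end

section
/- For any T ∈ ℝ^(2×m), a function h : Fin 2 → Fin m is IC on T if and only if T_{1,h(1)} + T_{2,h(2)} ≥ T_{1,h(2)} + T_{2,h(1)}. -/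
theorem IsIC.add_le_add {r m : ℕ} {T : Matrix (Fin r) (Fin m) ℝ} {h : Fin r → Fin m}
    (hIC : IsIC T h) (i j : Fin r) : T i (h j) + T j (h i) ≤ T i (h i) + T j (h j) := by
  obtain ⟨x, hx⟩ := hIC
  linarith [hx i (h j), hx j (h i)]

/-- For two rows, prices are the upper envelope of the two rows' utilities, normalised so that
`x (h 0) = 0` and `x (h 1) = T 0 (h 1) - T 0 (h 0)`; monotonicity is exactly what makes the
envelope attain these values at `h 0` and `h 1`. -/
theorem isIC_of_add_le {m : ℕ} (T : Matrix (Fin 2) (Fin m) ℝ) (h : Fin 2 → Fin m)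
    (hT : T 0 (h 1) + T 1 (h 0) ≤ T 0 (h 0) + T 1 (h 1)) : IsIC T h := by
  obtain ⟨d, hd⟩ : ∃ d, d = T 0 (h 1) - T 0 (h 0) := ⟨_, rfl⟩
  let x : Fin m → ℝ := fun k => max (T 0 k - T 0 (h 0)) (T 1 k - T 1 (h 1) + d)
  have hx₀ : x (h 0) = 0 := by
    simp only [x, sub_self]; exact max_eq_left (by linarith)
  have hx₁ : x (h 1) = d := by
    simp only [x, sub_self, zero_add]; exact max_eq_right (by linarith)
  refine ⟨x, fun i k => ?_⟩
  fin_cases i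
  · have := le_max_left (T 0 k - T 0 (h 0)) (T 1 k - T 1 (h 1) + d)
    simp only [Fin.zero_eta, ge_iff_le, hx₀]
    linarith
  · have := le_max_right (T 0 k - T 0 (h 0)) (T 1 k - T 1 (h 1) + d)
    simp only [Fin.mk_one, ge_iff_le, hx₁]
    linarith

theorem stmt_17 {m : ℕ} (T : Matrix (Fin 2) (Fin m) ℝ) (h : Fin 2 → Fin m) :
    IsIC T h ↔ T 0 (h 0) + T 1 (h 1) ≥ T 0 (h 1) + T 1 (h 0) :=
  ⟨fun hIC => hIC.add_le_add 0 1, isIC_of_add_le T h⟩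
end
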